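/- arXiv:2507.05796 — 6 statements merged into one kernel-verified Lean document; each statement's English description precedes it below -/
import Mathlib

section
/- For any ideal I in a local ring (R, m) and any natural number m, the (m+1)-th jet closure of I is contained in the m-th jet closure of I, i.e. I^{(m+1)-jc} ⊆ I^{m-jc}. -/
open Polynomial

/-- The truncated polynomial ring `A[t]/(t^(m+1))`. -/
abbrev JetTrunc (A : Type) [CommRing A] (m : ℕ) : Type :=
  Polynomial A ⧸ (Ideal.span {(X : Polynomial A) ^ (m + 1)} : Ideal (Polynomial A))

/-- The image of the variable `t` in `A[t]/(t^(m+1))`. -/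
noncomputable def jetT (A : Type) [CommRing A] (m : ℕ) : JetTrunc A m :=
  Ideal.Quotient.mk _ (X : Polynomial A)

/-- A test datum for the `m`-th jet closure of an ideal `I` of a local `k`-algebra `(R, 𝔪)`:
a `k`-algebra `A` together with a `k`-algebra map `φ : R → A[t]/(t^(m+1))` killing `I`
and sending the maximal ideal `𝔪` into `(t)` (i.e. an `A`-point of the scheme of local
`m`-jets of `Spec (R/I)` over the closed point). -/
structure JetTest (k : Type) [CommRing k] {R : Type} [CommRing R] [Algebra k R]
    (𝔪 : Ideal R) (m : ℕ) (I : Ideal R) where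
  A : Type
  [instCommRing : CommRing A]
  [instAlgebra : Algebra k A]
  φ : R →ₐ[k] JetTrunc A m
  ker_I : ∀ f ∈ I, φ f = 0
  max_to_t : ∀ f ∈ 𝔪, φ f ∈ Ideal.span {jetT A m}

attribute [instance] JetTest.instCommRing JetTest.instAlgebra

/-- The `m`-th jet closure `I^{m-jc}` of an ideal `I` in a local `k`-algebra `(R, 𝔪)`:
the intersection of the kernels of all jet test maps (functor-of-points description of the
kernel of `μ_m : R → R_m[t]/(t^(m+1), I_m, 𝔪^e)`). -/
noncomputable def jetClosure (k : Type) [CommRing k] {R : Type} [CommRing R] [Algebra k R]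
    (𝔪 : Ideal R) (m : ℕ) (I : Ideal R) : Ideal R :=
  sInf { J : Ideal R | ∃ T : JetTest k 𝔪 m I, J = RingHom.ker T.φ }

/-!
An `m`-jet test over `A` yields an `(m+1)`-jet test over `B = A[t]/(t^(m+1))` by composing with
the substitution `t ↦ t * s` into `B[s]/(s^(m+2))`. The coefficient of `s^j` in `p(t * s)` is
`p_j t^j ∈ B`, which vanishes only if `p_j = 0` for `j ≤ m`, so the substitution is injective and
both tests have the same kernel. Hence every kernel cut out by an `m`-jet test is also cut out by
an `(m+1)`-jet test.
-/

namespace JetTrunc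

variable {A : Type} [CommRing A] {m : ℕ}

theorem mk_eq_zero_iff {p : A[X]} :
    (Ideal.Quotient.mk _ p : JetTrunc A m) = 0 ↔ ∀ d ≤ m, p.coeff d = 0 := by
  simp only [Ideal.Quotient.eq_zero_iff_mem, Ideal.mem_span_singleton, X_pow_dvd_iff,
    Nat.lt_succ_iff]

theorem jetT_pow_succ : jetT A m ^ (m + 1) = 0 := by
  rw [jetT, ← map_pow, Ideal.Quotient.eq_zero_iff_mem]
  exact Ideal.mem_span_singleton_self _

theorem algebraMap_mul_jetT_pow_eq_zero_iff {a : A} {d : ℕ} (hd : d ≤ m) :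
    algebraMap A (JetTrunc A m) a * jetT A m ^ d = 0 ↔ a = 0 := by
  rw [jetT, show algebraMap A (JetTrunc A m) a = Ideal.Quotient.mk _ (C a) from rfl, ← map_pow,
    ← map_mul, mk_eq_zero_iff]
  refine ⟨fun h => by simpa using h d hd, fun h d _ => by simp [h]⟩

variable (k : Type) [CommRing k] [Algebra k A]

/-- `p(t) ↦ p(t * s)`, where `s` is the variable of the outer truncated polynomial ring. -/
noncomputable def rescale : JetTrunc A m →ₐ[k] JetTrunc (JetTrunc A m) (m + 1) :=
  Ideal.Quotient.liftₐ _
    (aevalTower (IsScalarTower.toAlgHom k A _)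
      (algebraMap _ _ (jetT A m) * jetT (JetTrunc A m) (m + 1)))
    (by
      intro p hp
      obtain ⟨q, rfl⟩ := Ideal.mem_span_singleton'.mp hp
      rw [map_mul, map_pow, aevalTower_X, mul_pow, ← map_pow, jetT_pow_succ, map_zero,
        zero_mul, mul_zero])

theorem rescale_mk (p : A[X]) :
    rescale k (Ideal.Quotient.mk _ p) =
      (Ideal.Quotient.mk _ ((p.map (algebraMap A (JetTrunc A m))).comp (C (jetT A m) * X)) :
        JetTrunc (JetTrunc A m) (m + 1)) := by
  change aevalTower (IsScalarTower.toAlgHom k A _) _ p = _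
  induction p using Polynomial.induction_on' with
  | add p q hp hq => simp [hp, hq]
  | monomial n a =>
    rw [← C_mul_X_pow_eq_monomial, map_mul, map_pow, aevalTower_C, aevalTower_X]
    simp only [Polynomial.map_mul, Polynomial.map_pow, map_C, map_X, mul_comp, pow_comp, C_comp,
      X_comp, map_mul, map_pow]
    rfl

theorem rescale_jetT :
    rescale k (jetT A m) = algebraMap _ _ (jetT A m) * jetT (JetTrunc A m) (m + 1) :=
  aevalTower_X _ _

theorem rescale_injective : Function.Injective (rescale k : JetTrunc A m → _) := by
  refine (injective_iff_map_eq_zero _).mpr fun x hx => ?_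
  obtain ⟨p, rfl⟩ := Ideal.Quotient.mk_surjective x
  rw [rescale_mk, mk_eq_zero_iff] at hx
  refine mk_eq_zero_iff.mpr fun d hd => (algebraMap_mul_jetT_pow_eq_zero_iff hd).mp ?_
  simpa using hx d (hd.trans m.le_succ)

end JetTrunc

namespace JetTest

variable {k : Type} [CommRing k] {R : Type} [CommRing R] [Algebra k R] {𝔪 : Ideal R} {m : ℕ}
  {I : Ideal R}

noncomputable def succ (T : JetTest k 𝔪 m I) : JetTest k 𝔪 (m + 1) I where
  A := JetTrunc T.A m
  φ := (JetTrunc.rescale k).comp T.φ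
  ker_I f hf := by rw [AlgHom.comp_apply, T.ker_I f hf, map_zero]
  max_to_t f hf := by
    obtain ⟨c, hc⟩ := Ideal.mem_span_singleton.mp (T.max_to_t f hf)
    rw [AlgHom.comp_apply, hc, map_mul, JetTrunc.rescale_jetT, Ideal.mem_span_singleton]
    exact (dvd_mul_left _ _).mul_right _

theorem ker_succ (T : JetTest k 𝔪 m I) : RingHom.ker T.succ.φ = RingHom.ker T.φ :=
  Ideal.ext fun _ => map_eq_zero_iff _ (JetTrunc.rescale_injective k)

end JetTest

theorem jetClosure_succ_le_jetClosure_general (k : Type) [Field k]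
    (R : Type) [CommRing R] [Algebra k R] [IsLocalRing R] (I : Ideal R) (m : ℕ) :
    jetClosure k (IsLocalRing.maximalIdeal R) (m + 1) I ≤
      jetClosure k (IsLocalRing.maximalIdeal R) m I := by
  refine le_sInf ?_
  rintro _ ⟨T, rfl⟩
  rw [← T.ker_succ]
  exact sInf_le ⟨T.succ, rfl⟩

/-- For any ideal `I` in a local ring `(R, 𝔪)` and any `m : ℕ`,
`I^{(m+1)-jc} ⊆ I^{m-jc}`. -/
theorem jetClosure_succ_le_jetClosure (k : Type) [Field k] [CharZero k]
    (R : Type) [CommRing R] [Algebra k R] [IsLocalRing R] (I : Ideal R) (m : ℕ) :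
    jetClosure k (IsLocalRing.maximalIdeal R) (m + 1) I ≤
      jetClosure k (IsLocalRing.maximalIdeal R) m I :=
  jetClosure_succ_le_jetClosure_general k R I m
end

section
/- For any ideal I in a local ring (R, m) and any natural number m, we have I + m^{m+1} ⊆ I^{m-jc}. -/
open Polynomial

/-- For any ideal `I` in a local ring `(R, 𝔪)` and any `m : ℕ`,
`I + 𝔪^(m+1) ⊆ I^{m-jc}`. -/
theorem sup_pow_maximalIdeal_le_jetClosure (k : Type) [Field k]
    (R : Type) [CommRing R] [Algebra k R] [IsLocalRing R] (I : Ideal R) (m : ℕ) :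
    I ⊔ (IsLocalRing.maximalIdeal R) ^ (m + 1) ≤
      jetClosure k (IsLocalRing.maximalIdeal R) m I := by
  apply le_sInf
  rintro J ⟨T, rfl⟩
  apply sup_le
  · intro f hf
    exact T.ker_I f hf
  · intro f hf
    have hT : (jetT T.A m) ^ (m + 1) = 0 := by
      rw [jetT, ← map_pow]
      exact (Ideal.Quotient.eq_zero_iff_mem).2 (Ideal.subset_span rfl)
    have h1 : Ideal.map (T.φ : R →+* JetTrunc T.A m)
        ((IsLocalRing.maximalIdeal R) ^ (m + 1)) ≤
        (Ideal.span {jetT T.A m}) ^ (m + 1) := by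
      rw [Ideal.map_pow]
      exact Ideal.pow_right_mono (Ideal.map_le_iff_le_comap.2 fun x hx => Ideal.mem_comap.2 (T.max_to_t x hx)) _
    have h2 : T.φ f ∈ (Ideal.span {jetT T.A m}) ^ (m + 1) :=
      h1 (Ideal.mem_map_of_mem _ hf)
    rw [Ideal.span_singleton_pow, hT, Ideal.span_singleton_eq_bot.2 rfl] at h2
    exact h2
end

section
/- Let R = k[[x_1, ..., x_n]] and let I ⊆ R be an ideal generated by homogeneous polynomials f_1, ..., f_s ∈ k[x_1, ..., x_n]. Then for every m ≥ 0, the m-th jet closure of I equals I + m^{m+1}, where m is the maximal ideal (x_1, ..., x_n) of R. -/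
open Polynomial

/-- The maximal ideal `(x_1, ..., x_n)` of the formal power series ring `k[[x_1, ..., x_n]]`. -/
noncomputable def mIdeal (k : Type) [Field k] (n : ℕ) : Ideal (MvPowerSeries (Fin n) k) :=
  RingHom.ker (MvPowerSeries.constantCoeff : MvPowerSeries (Fin n) k →+* k)

/-!
The test datum behind `I^{m-jc} ⊆ I + 𝔪^{m+1}` sends `g ∈ k[[x]]` to
`∑_{e ≤ m} [g_e] t^e ∈ (k[x]/I₀)[t]/(t^{m+1})`, where `g_e` is the degree-`e` component of `g`
and `I₀ ⊆ k[x]` is the ideal generated by the `f_i`; it kills `I` because `I₀` is homogeneous.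
Its kernel consists of the `g` whose components of degree `≤ m` lie in `I₀`, i.e. whose
truncation in degree `≤ m` lies in `I₀`, and the remainder lies in `𝔪^{m+1}`. The reverse
inclusion holds for every ideal: a test map sends `𝔪^{m+1}` into `(t)^{m+1} = 0`.
-/

open Finset

namespace MvPolynomial

variable {σ R : Type*} [CommSemiring R]

section GradedAlgebra

attribute [local instance] MvPolynomial.gradedAlgebra

theorem homogeneousComponent_mul (p q : MvPolynomial σ R) (e : ℕ) :
    homogeneousComponent e (p * q) =
      ∑ ij ∈ antidiagonal e, homogeneousComponent ij.1 p * homogeneousComponent ij.2 q := by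
  simp only [← decomposition.decompose'_apply]
  change (DirectSum.decompose (homogeneousSubmodule σ R) (p * q) e : MvPolynomial σ R) = _
  rw [DirectSum.decompose_mul, DirectSum.coe_mul_apply_eq_sum_antidiagonal]
  rfl

theorem isHomogeneous_span_range {ι : Type*} {f : ι → MvPolynomial σ R} {d : ι → ℕ}
    (hf : ∀ i, (f i).IsHomogeneous (d i)) :
    (Ideal.span (Set.range f)).IsHomogeneous (homogeneousSubmodule σ R) :=
  Ideal.homogeneous_span _ _ (by rintro _ ⟨i, rfl⟩; exact ⟨d i, hf i⟩)

end GradedAlgebra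

end MvPolynomial

namespace MvPowerSeries

variable {σ R : Type*} [Finite σ]

section CommSemiring

variable [CommSemiring R]

noncomputable def homogeneousComponentPoly (e : ℕ) (g : MvPowerSeries σ R) : MvPolynomial σ R :=
  MvPolynomial.homogeneousComponent e (truncTotal (e + 1) g)

theorem homogeneousComponentPoly_zero (g : MvPowerSeries σ R) :
    homogeneousComponentPoly 0 g = MvPolynomial.C (constantCoeff g) := by
  rw [homogeneousComponentPoly, MvPolynomial.homogeneousComponent_zero,
    coeff_truncTotal _ (by simp), coeff_zero_eq_constantCoeff_apply]

theorem coeff_homogeneousComponentPoly (e : ℕ) (g : MvPowerSeries σ R) (u : σ →₀ ℕ) :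
    (homogeneousComponentPoly e g).coeff u = if u.degree = e then coeff u g else 0 := by
  rw [homogeneousComponentPoly, MvPolynomial.coeff_homogeneousComponent, coeff_truncTotal_eq_ite]
  split_ifs <;> first | rfl | omega

theorem homogeneousComponentPoly_eq_of_lt {e N : ℕ} (h : e < N) (g : MvPowerSeries σ R) :
    homogeneousComponentPoly e g = MvPolynomial.homogeneousComponent e (truncTotal N g) := by
  ext u
  rw [coeff_homogeneousComponentPoly, MvPolynomial.coeff_homogeneousComponent,
    coeff_truncTotal_eq_ite]
  split_ifs <;> first | rfl | omega

theorem homogeneousComponentPoly_coe (e : ℕ) (p : MvPolynomial σ R) :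
    homogeneousComponentPoly e (p : MvPowerSeries σ R) =
      MvPolynomial.homogeneousComponent e p := by
  ext u
  rw [coeff_homogeneousComponentPoly, MvPolynomial.coeff_homogeneousComponent,
    MvPolynomial.coeff_coe]

theorem homogeneousComponentPoly_mul (g h : MvPowerSeries σ R) (e : ℕ) :
    homogeneousComponentPoly e (g * h) = ∑ ij ∈ antidiagonal e,
      homogeneousComponentPoly ij.1 g * homogeneousComponentPoly ij.2 h := by
  have htrunc : homogeneousComponentPoly e (g * h) =
      MvPolynomial.homogeneousComponent e (truncTotal (e + 1) g * truncTotal (e + 1) h) := by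
    ext u
    rw [coeff_homogeneousComponentPoly, MvPolynomial.coeff_homogeneousComponent]
    split_ifs with hu
    · exact (coeff_truncTotal_mul_truncTotal_eq_coeff_mul g h (by omega)).symm
    · rfl
  rw [htrunc, MvPolynomial.homogeneousComponent_mul]
  refine Finset.sum_congr rfl fun ij hij => ?_
  have := HasAntidiagonal.mem_antidiagonal.mp hij
  rw [homogeneousComponentPoly_eq_of_lt (N := e + 1) (by omega),
    homogeneousComponentPoly_eq_of_lt (N := e + 1) (by omega)]

theorem sum_homogeneousComponentPoly (N : ℕ) (g : MvPowerSeries σ R) :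
    ∑ e ∈ Finset.range N, homogeneousComponentPoly e g = truncTotal N g := by
  ext u
  simp only [MvPolynomial.coeff_sum, coeff_homogeneousComponentPoly, Finset.sum_ite_eq,
    Finset.mem_range, coeff_truncTotal_eq_ite]

/-- The substitution `x_i ↦ x_i t`: the coefficient of `t ^ e` is the degree-`e` component. -/
noncomputable def homogeneousSeries : MvPowerSeries σ R →ₐ[R] PowerSeries (MvPolynomial σ R) :=
  AlgHom.ofLinearMap
    { toFun g := PowerSeries.mk fun e => homogeneousComponentPoly e g
      map_add' g h := by ext e; simp [homogeneousComponentPoly]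
      map_smul' c g := by ext e; simp [homogeneousComponentPoly] }
    (by
      ext e : 1
      simp only [LinearMap.coe_mk, AddHom.coe_mk, PowerSeries.coeff_mk, PowerSeries.coeff_one]
      rw [← MvPolynomial.coe_one, homogeneousComponentPoly_coe,
        MvPolynomial.homogeneousComponent_of_mem (MvPolynomial.isHomogeneous_one σ R)])
    (fun g h => by ext e; simp [PowerSeries.coeff_mul, homogeneousComponentPoly_mul])

theorem coeff_homogeneousSeries (e : ℕ) (g : MvPowerSeries σ R) :
    PowerSeries.coeff e (homogeneousSeries g) = homogeneousComponentPoly e g :=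
  PowerSeries.coeff_mk e fun e => homogeneousComponentPoly e g

end CommSemiring

/-- `R⟦σ⟧` is the `(x)`-adic completion of `R[σ]`, and the kernel of the `N`-th projection of
the completion is `(x) ^ N`. -/
theorem sub_truncTotal_mem_pow_ker_constantCoeff [CommRing R] (N : ℕ) (g : MvPowerSeries σ R) :
    g - (truncTotal N g : MvPowerSeries σ R) ∈
      RingHom.ker (constantCoeff (σ := σ) (R := R)) ^ N := by
  set x := g - (truncTotal N g : MvPowerSeries σ R)
  have hx : truncTotal N x = 0 := by
    ext u
    simp only [x, map_sub, MvPolynomial.coeff_sub, coeff_truncTotal_eq_ite, MvPolynomial.coeff_coe]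
    split_ifs <;> simp
  have hker : toAdicCompletionAlgEquiv σ R x ∈
      (AdicCompletion.eval (MvPolynomial.idealOfVars σ R) (MvPolynomial σ R) N).ker := by
    rw [LinearMap.mem_ker, AdicCompletion.eval_apply, toAdicCompletionAlgEquiv_apply,
      toAdicCompletion_apply_eq_mk_truncTotal, hx, map_zero]
  rw [← AdicCompletion.pow_smul_top_eq_ker_eval (MvPolynomial.idealOfVars_fg σ R)] at hker
  have hsmul : x ∈ MvPolynomial.idealOfVars σ R ^ N •
      (⊤ : Submodule (MvPolynomial σ R) (MvPowerSeries σ R)) := by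
    have := Submodule.mem_map_of_mem (f := (toAdicCompletionAlgEquiv σ R).symm.toLinearMap) hker
    rwa [Submodule.map_smul'', Submodule.map_top, LinearEquiv.range,
      AlgEquiv.toLinearMap_apply, AlgEquiv.symm_apply_apply] at this
  rw [Ideal.smul_top_eq_map, Submodule.restrictScalars_mem, Ideal.map_pow] at hsmul
  refine Ideal.pow_right_mono ?_ N hsmul
  rw [Ideal.map_le_iff_le_comap, MvPolynomial.idealOfVars, Ideal.span_le]
  rintro _ ⟨i, rfl⟩
  simp [algebraMap_apply']

end MvPowerSeries

namespace JetTrunc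

variable (k : Type) [CommRing k] {A : Type} [CommRing A] [Algebra k A] (m : ℕ)

theorem mk_trunc_coe (p : A[X]) :
    (Ideal.Quotient.mk _ (PowerSeries.trunc (m + 1) (p : PowerSeries A)) : JetTrunc A m) =
      Ideal.Quotient.mk _ p := by
  rw [Ideal.Quotient.eq, Ideal.mem_span_singleton, X_pow_dvd_iff]
  intro e he
  simp [PowerSeries.coeff_trunc, he]

noncomputable def ofPowerSeries : PowerSeries A →ₐ[k] JetTrunc A m :=
  AlgHom.ofLinearMap
    ((Ideal.Quotient.mkₐ k _).toLinearMap ∘ₗ (PowerSeries.trunc (m + 1)).restrictScalars k)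
    (by simp [PowerSeries.trunc_one])
    (fun f g => by
      simp only [LinearMap.coe_comp, Function.comp_apply, LinearMap.coe_restrictScalars,
        AlgHom.toLinearMap_apply, Ideal.Quotient.mkₐ_eq_mk, ← map_mul]
      rw [← PowerSeries.trunc_trunc_mul_trunc, ← Polynomial.coe_mul, mk_trunc_coe])

variable {k m}

theorem ofPowerSeries_apply (f : PowerSeries A) :
    ofPowerSeries k m f = Ideal.Quotient.mk _ (PowerSeries.trunc (m + 1) f) := rfl

theorem ofPowerSeries_eq_zero_iff (f : PowerSeries A) :
    ofPowerSeries k m f = 0 ↔ ∀ e ≤ m, PowerSeries.coeff e f = 0 := by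
  rw [ofPowerSeries_apply, Ideal.Quotient.eq_zero_iff_mem, Ideal.mem_span_singleton,
    X_pow_dvd_iff]
  simp +contextual only [PowerSeries.coeff_trunc, Nat.lt_succ_iff, if_true]

theorem ofPowerSeries_mem_span_jetT {f : PowerSeries A} (hf : PowerSeries.constantCoeff f = 0) :
    ofPowerSeries k m f ∈ Ideal.span {jetT A m} := by
  obtain ⟨q, hq⟩ : X ∣ PowerSeries.trunc (m + 1) f := by
    rw [X_dvd_iff, PowerSeries.coeff_trunc, if_pos m.succ_pos,
      PowerSeries.coeff_zero_eq_constantCoeff_apply, hf]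
  rw [ofPowerSeries_apply, hq, map_mul]
  exact Ideal.mul_mem_right _ _ (Ideal.subset_span rfl)

end JetTrunc

theorem jetT_pow_succ (A : Type) [CommRing A] (m : ℕ) : jetT A m ^ (m + 1) = 0 := by
  rw [jetT, ← map_pow, Ideal.Quotient.eq_zero_iff_mem]
  exact Ideal.subset_span rfl

section JetClosure

variable {k : Type} [CommRing k] {R : Type} [CommRing R] [Algebra k R] {𝔪 : Ideal R} {m : ℕ}
  {I : Ideal R}

theorem JetTest.jetClosure_le_ker (T : JetTest k 𝔪 m I) :
    jetClosure k 𝔪 m I ≤ RingHom.ker T.φ :=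
  sInf_le ⟨T, rfl⟩

theorem sup_pow_le_jetClosure : I ⊔ 𝔪 ^ (m + 1) ≤ jetClosure k 𝔪 m I := by
  refine le_sInf ?_
  rintro _ ⟨T, rfl⟩
  refine sup_le (fun g hg => T.ker_I g hg) ?_
  rw [RingHom.ker_eq_comap_bot, ← Ideal.map_le_iff_le_comap, Ideal.map_pow]
  calc (𝔪.map T.φ) ^ (m + 1) ≤ Ideal.span {jetT T.A m} ^ (m + 1) :=
        Ideal.pow_right_mono (Ideal.map_le_iff_le_comap.mpr T.max_to_t) _
    _ = ⊥ := by rw [Ideal.span_singleton_pow, jetT_pow_succ, Ideal.span_singleton_eq_bot]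

end JetClosure

section Homogeneous

open MvPolynomial (homogeneousSubmodule coeToMvPowerSeries.ringHom)
open MvPowerSeries

attribute [local instance] MvPolynomial.gradedAlgebra

variable {k : Type} [CommRing k] {σ : Type} [Finite σ]

noncomputable def homogeneousJet (I₀ : Ideal (MvPolynomial σ k)) (m : ℕ) :
    MvPowerSeries σ k →ₐ[k] JetTrunc (MvPolynomial σ k ⧸ I₀) m :=
  (JetTrunc.ofPowerSeries k m).comp
    ((PowerSeries.mapAlgHom (Ideal.Quotient.mkₐ k I₀)).comp homogeneousSeries)

theorem homogeneousJet_eq_zero_iff {I₀ : Ideal (MvPolynomial σ k)} {m : ℕ}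
    {g : MvPowerSeries σ k} :
    homogeneousJet I₀ m g = 0 ↔ ∀ e ≤ m, homogeneousComponentPoly e g ∈ I₀ := by
  simp [homogeneousJet, JetTrunc.ofPowerSeries_eq_zero_iff, PowerSeries.mapAlgHom_apply,
    coeff_homogeneousSeries, Ideal.Quotient.eq_zero_iff_mem]

theorem homogeneousJet_mem_span_jetT {I₀ : Ideal (MvPolynomial σ k)} {m : ℕ}
    {g : MvPowerSeries σ k} (hg : constantCoeff g = 0) :
    homogeneousJet I₀ m g ∈ Ideal.span {jetT _ m} := by
  refine JetTrunc.ofPowerSeries_mem_span_jetT ?_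
  simp [PowerSeries.mapAlgHom_apply, ← PowerSeries.coeff_zero_eq_constantCoeff_apply,
    coeff_homogeneousSeries, homogeneousComponentPoly_zero, hg]

noncomputable def JetTest.ofIsHomogeneous {I₀ : Ideal (MvPolynomial σ k)}
    (hI₀ : I₀.IsHomogeneous (homogeneousSubmodule σ k)) (m : ℕ) :
    JetTest k (RingHom.ker (constantCoeff (σ := σ) (R := k))) m
      (I₀.map coeToMvPowerSeries.ringHom) where
  A := MvPolynomial σ k ⧸ I₀
  φ := homogeneousJet I₀ m
  ker_I g hg := by
    refine RingHom.mem_ker.mp (Ideal.map_le_iff_le_comap.mpr (fun p hp => ?_) hg)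
    rw [Ideal.mem_comap, RingHom.mem_ker, MvPolynomial.coeToMvPowerSeries.ringHom_apply,
      homogeneousJet_eq_zero_iff]
    intro e _
    rw [homogeneousComponentPoly_coe]
    exact MvPolynomial.homogeneousComponent_mem_of_mem hI₀ hp e
  max_to_t _ hg := homogeneousJet_mem_span_jetT (RingHom.mem_ker.mp hg)

theorem ker_homogeneousJet_le (I₀ : Ideal (MvPolynomial σ k)) (m : ℕ) :
    RingHom.ker (homogeneousJet I₀ m) ≤ I₀.map coeToMvPowerSeries.ringHom ⊔
      RingHom.ker (constantCoeff (σ := σ) (R := k)) ^ (m + 1) := by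
  intro g hg
  have htrunc : truncTotal (m + 1) g ∈ I₀ := by
    rw [← sum_homogeneousComponentPoly]
    exact Ideal.sum_mem _ fun e he =>
      homogeneousJet_eq_zero_iff.mp hg e (Nat.lt_succ_iff.mp (Finset.mem_range.mp he))
  rw [← add_sub_cancel (truncTotal (m + 1) g : MvPowerSeries σ k) g]
  exact Ideal.add_mem _ (Ideal.mem_sup_left (Ideal.mem_map_of_mem _ htrunc))
    (Ideal.mem_sup_right (sub_truncTotal_mem_pow_ker_constantCoeff _ g))

theorem jetClosure_map_of_isHomogeneous {I₀ : Ideal (MvPolynomial σ k)}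
    (hI₀ : I₀.IsHomogeneous (homogeneousSubmodule σ k)) (m : ℕ) :
    jetClosure k (RingHom.ker (constantCoeff (σ := σ) (R := k))) m
        (I₀.map coeToMvPowerSeries.ringHom) =
      I₀.map coeToMvPowerSeries.ringHom ⊔
        RingHom.ker (constantCoeff (σ := σ) (R := k)) ^ (m + 1) :=
  le_antisymm
    ((JetTest.ofIsHomogeneous hI₀ m).jetClosure_le_ker.trans (ker_homogeneousJet_le I₀ m))
    sup_pow_le_jetClosure

end Homogeneous

theorem jetClosure_of_homogeneous_general (k : Type) [Field k]
    (n s : ℕ) (f : Fin s → MvPolynomial (Fin n) k) (d : Fin s → ℕ)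
    (hf : ∀ i, (f i).IsHomogeneous (d i)) (m : ℕ) :
    jetClosure k (mIdeal k n) m
        (Ideal.span (Set.range fun i => ((f i : MvPowerSeries (Fin n) k)))) =
      Ideal.span (Set.range fun i => ((f i : MvPowerSeries (Fin n) k))) ⊔
        (mIdeal k n) ^ (m + 1) := by
  have hspan : Ideal.span (Set.range fun i => ((f i : MvPowerSeries (Fin n) k))) =
      (Ideal.span (Set.range f)).map MvPolynomial.coeToMvPowerSeries.ringHom := by
    rw [Ideal.map_span, ← Set.range_comp]
    rfl
  rw [hspan]
  exact jetClosure_map_of_isHomogeneous (MvPolynomial.isHomogeneous_span_range hf) m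

/-- if `I ⊆ k[[x_1, ..., x_n]]` is extended from an ideal generated by
homogeneous polynomials `f_1, ..., f_s ∈ k[x_1, ..., x_n]`, then for every `m`,
`I^{m-jc} = I + 𝔪^(m+1)`. -/
theorem jetClosure_of_homogeneous (k : Type) [Field k] [IsAlgClosed k] [CharZero k]
    (n s : ℕ) (f : Fin s → MvPolynomial (Fin n) k) (d : Fin s → ℕ)
    (hf : ∀ i, (f i).IsHomogeneous (d i)) (m : ℕ) :
    jetClosure k (mIdeal k n) m
        (Ideal.span (Set.range fun i => ((f i : MvPowerSeries (Fin n) k)))) =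
      Ideal.span (Set.range fun i => ((f i : MvPowerSeries (Fin n) k))) ⊔
        (mIdeal k n) ^ (m + 1) :=
  jetClosure_of_homogeneous_general k n s f d hf m
end

section
/- In the polynomial ring k[x_1, ..., x_{n+1}], the element x_1 · (Σ_{j=1}^{n-1} x_j x_{n-j}) lies in the ideal generated by f_2, ..., f_{n-1}, where f_i = Σ_{j=1}^{i-1} x_j x_{i-j}; more precisely, there exist constants c_2, ..., c_{n-1} ∈ k such that x_1 f_n = Σ_{i=2}^{n-1} c_i x_{n+1-i} f_i. -/
open MvPolynomial


variable {k : Type} [CommRing k] {n : ℕ}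

/-- the index set of triples (a,b,n+1-a-b) -/
def Sset (n : ℕ) : Finset ((_ : ℕ) × ℕ) :=
  (Finset.Icc 1 (n-1)).sigma (fun a => Finset.Icc 1 (n-a))

lemma mem_Sset (hn : 3 ≤ n) {p : (_ : ℕ) × ℕ} :
    p ∈ Sset n ↔ 1 ≤ p.1 ∧ 1 ≤ p.2 ∧ p.1 + p.2 ≤ n := by
  simp only [Sset, Finset.mem_sigma, Finset.mem_Icc]
  omega

noncomputable def term (k : Type) [CommRing k] (n : ℕ) (p : (_ : ℕ) × ℕ) : MvPolynomial ℕ k :=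
  X p.1 * X p.2 * X (n + 1 - p.1 - p.2)

lemma swap_sum (hn : 3 ≤ n) :
    ∑ p ∈ Sset n, C ((p.1 : k)) * term k n p
      = ∑ p ∈ Sset n, C ((p.2 : k)) * term k n p := by
  apply Finset.sum_nbij' (fun p => ⟨p.2, p.1⟩) (fun p => ⟨p.2, p.1⟩)
  · intro p hp; rw [mem_Sset hn] at *; dsimp only; omega
  · intro p hp; rw [mem_Sset hn] at *; dsimp only; omega
  · intro p _; rfl
  · intro p _; rfl
  · intro p hp
    rw [mem_Sset hn] at hp
    have : n + 1 - p.2 - p.1 = n + 1 - p.1 - p.2 := by omega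
    simp only [term, this]
    ring

lemma cyc_sum (hn : 3 ≤ n) :
    ∑ p ∈ Sset n, C ((p.1 : k)) * term k n p
      = ∑ p ∈ Sset n, C (((n + 1 - p.1 - p.2 : ℕ) : k)) * term k n p := by
  apply Finset.sum_nbij' (fun p => ⟨n + 1 - p.1 - p.2, p.2⟩) (fun p => ⟨n + 1 - p.1 - p.2, p.2⟩)
  · intro p hp; rw [mem_Sset hn] at *; dsimp only; omega
  · intro p hp; rw [mem_Sset hn] at *; dsimp only; omega
  · intro p hp; rw [mem_Sset hn] at hp
    show (⟨n + 1 - (n + 1 - p.1 - p.2) - p.2, p.2⟩ : (_ : ℕ) × ℕ) = p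
    have : n + 1 - (n + 1 - p.1 - p.2) - p.2 = p.1 := by omega
    rw [this]
  · intro p hp; rw [mem_Sset hn] at hp
    show (⟨n + 1 - (n + 1 - p.1 - p.2) - p.2, p.2⟩ : (_ : ℕ) × ℕ) = p
    have : n + 1 - (n + 1 - p.1 - p.2) - p.2 = p.1 := by omega
    rw [this]
  · intro p hp
    rw [mem_Sset hn] at hp
    have h1 : n + 1 - (n + 1 - p.1 - p.2) - p.2 = p.1 := by omega
    have h2 : n + 1 - (n + 1 - p.1 - p.2) = p.1 + p.2 := by omega
    simp only [term, h1]
    ring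

lemma main_sum (hn : 3 ≤ n) :
    ∑ p ∈ Sset n, C (((n : k) + 1) - 3 * (p.1 : k)) * term k n p = 0 := by
  have h : ∑ p ∈ Sset n, C (((n : k) + 1) - 3 * (p.1 : k)) * term k n p
      = ∑ p ∈ Sset n, ((C ((p.1 : k)) * term k n p + C ((p.2 : k)) * term k n p
          + C (((n + 1 - p.1 - p.2 : ℕ) : k)) * term k n p)
          - (3 : MvPolynomial ℕ k) * (C ((p.1 : k)) * term k n p)) := by
    apply Finset.sum_congr rfl
    intro p hp
    rw [mem_Sset hn] at hp
    have hnat : p.1 + p.2 + (n + 1 - p.1 - p.2) = n + 1 := by omega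
    have hcast := congrArg (Nat.cast : ℕ → k) hnat
    push_cast at hcast
    have hco : ((n : k) + 1) - 3 * (p.1 : k)
        = (p.1 : k) + (p.2 : k) + ((n + 1 - p.1 - p.2 : ℕ) : k) - 3 * (p.1 : k) := by
      rw [hcast]
    rw [hco, map_sub, map_add, map_add]
    have h3 : (C (3 * (p.1 : k)) : MvPolynomial ℕ k) = 3 * C ((p.1 : k)) := by
      rw [map_mul, map_ofNat]
    rw [h3]
    ring
  rw [h, Finset.sum_sub_distrib, Finset.sum_add_distrib, Finset.sum_add_distrib,
    ← swap_sum hn, ← cyc_sum hn, ← Finset.mul_sum]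
  ring

noncomputable def ff (k : Type) [CommRing k] (i : ℕ) : MvPolynomial ℕ k :=
  ∑ j ∈ Finset.Icc 1 (i - 1), X j * X (i - j)

lemma nested (hn : 3 ≤ n) :
    ∑ a ∈ Finset.Icc 1 (n-1), C (((n : k) + 1) - 3 * (a : k)) * (X a * ff k (n + 1 - a))
      = ∑ p ∈ Sset n, C (((n : k) + 1) - 3 * (p.1 : k)) * term k n p := by
  rw [Sset, Finset.sum_sigma]
  apply Finset.sum_congr rfl
  intro a ha
  rw [Finset.mem_Icc] at ha
  have hb : n + 1 - a - 1 = n - a := by omega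
  rw [ff, hb, Finset.mul_sum, Finset.mul_sum]
  apply Finset.sum_congr rfl
  intro j hj
  rw [term]
  ring

lemma key (hn : 3 ≤ n) :
    C ((n : k) - 2) * (X 1 * ff k n)
      = ∑ i ∈ Finset.Icc 2 (n-1), C (2 * (n : k) + 2 - 3 * (i : k)) * (X (n + 1 - i) * ff k i) := by
  have h0 := main_sum (k := k) hn
  rw [← nested hn] at h0
  have hins : Finset.Icc 1 (n-1) = insert 1 (Finset.Icc 2 (n-1)) := by
    ext x; simp [Finset.mem_Icc, Finset.mem_insert]; omega
  rw [hins, Finset.sum_insert (by simp)] at h0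
  have h1 : n + 1 - 1 = n := by omega
  rw [h1] at h0
  have h2 : C ((n : k) - 2) * (X 1 * ff k n)
      = - ∑ a ∈ Finset.Icc 2 (n-1), C (((n : k) + 1) - 3 * (a : k)) * (X a * ff k (n + 1 - a)) := by
    have hc : ((n : k) - 2) = ((n : k) + 1) - 3 * ((1 : ℕ) : k) := by push_cast; ring
    rw [hc]
    linear_combination h0
  rw [h2, ← Finset.sum_neg_distrib]
  apply Finset.sum_nbij' (fun a => n + 1 - a) (fun i => n + 1 - i)
  · intro a ha; rw [Finset.mem_Icc] at *; omega
  · intro a ha; rw [Finset.mem_Icc] at *; omega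
  · intro a ha; rw [Finset.mem_Icc] at ha; omega
  · intro a ha; rw [Finset.mem_Icc] at ha; omega
  · intro a ha
    rw [Finset.mem_Icc] at ha
    have h3 : n + 1 - (n + 1 - a) = a := by omega
    have h4 : ((n + 1 - a : ℕ) : k) = (n : k) + 1 - (a : k) := by
      have : (a : k) + ((n + 1 - a : ℕ) : k) = ((n : k) + 1) := by
        have := congrArg (Nat.cast : ℕ → k) (show a + (n + 1 - a) = n + 1 by omega)
        push_cast at this; linear_combination this
      linear_combination this
    rw [h3, h4]
    have h5 : 2 * (n : k) + 2 - 3 * ((n : k) + 1 - (a : k)) = -(((n : k) + 1) - 3 * (a : k)) := by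
      ring
    rw [h5, map_neg]
    ring

/-- in `k[x_1, ..., x_{n+1}]`, with `f_i = Σ_{j=1}^{i-1} x_j x_{i-j}`,
there exist constants `c_2, ..., c_{n-1} ∈ k` such that
`x_1 f_n = Σ_{i=2}^{n-1} c_i x_{n+1-i} f_i`; in particular `x_1 f_n` lies in the ideal
generated by `f_2, ..., f_{n-1}`. -/
theorem X_one_mul_f_mem_span (k : Type) [Field k] [CharZero k] (n : ℕ) (hn : 3 ≤ n) :
    (∃ c : ℕ → k,
      (X 1 : MvPolynomial ℕ k) * (∑ j ∈ Finset.Icc 1 (n - 1), X j * X (n - j)) =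
        ∑ i ∈ Finset.Icc 2 (n - 1),
          C (c i) * X (n + 1 - i) * (∑ j ∈ Finset.Icc 1 (i - 1), X j * X (i - j))) ∧
    (X 1 : MvPolynomial ℕ k) * (∑ j ∈ Finset.Icc 1 (n - 1), X j * X (n - j)) ∈
      Ideal.span ((fun i => ∑ j ∈ Finset.Icc 1 (i - 1), (X j : MvPolynomial ℕ k) * X (i - j)) ''
        (Set.Icc 2 (n - 1))) := by
  have hne : ((n : k) - 2) ≠ 0 := by
    have h := (Nat.cast_ne_zero (R := k)).mpr (show n - 2 ≠ 0 by omega)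
    have h2 : ((n - 2 : ℕ) : k) = (n : k) - 2 := by
      have h3 := congrArg (Nat.cast : ℕ → k) (show (n - 2) + 2 = n by omega)
      push_cast at h3; linear_combination h3
    rwa [h2] at h
  have heq : (X 1 : MvPolynomial ℕ k) * ff k n
      = ∑ i ∈ Finset.Icc 2 (n - 1),
          C ((2 * (n : k) + 2 - 3 * (i : k)) * ((n : k) - 2)⁻¹) * X (n + 1 - i) * ff k i := by
    have hk := key (k := k) hn
    have h4 : (X 1 : MvPolynomial ℕ k) * ff k n
        = C (((n : k) - 2)⁻¹) * (C ((n : k) - 2) * (X 1 * ff k n)) := by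
      rw [← mul_assoc, ← map_mul, inv_mul_cancel₀ hne, C_1, one_mul]
    rw [h4, hk, Finset.mul_sum]
    apply Finset.sum_congr rfl
    intro i hi
    rw [map_mul]
    ring
  constructor
  · exact ⟨fun i => (2 * (n : k) + 2 - 3 * (i : k)) * ((n : k) - 2)⁻¹, heq⟩
  · show (X 1 : MvPolynomial ℕ k) * ff k n ∈ Ideal.span (ff k '' Set.Icc 2 (n - 1))
    rw [heq]
    apply Ideal.sum_mem
    intro i hi
    rw [Finset.mem_Icc] at hi
    exact Ideal.mul_mem_left _ _
      (Ideal.subset_span ⟨i, Set.mem_Icc.mpr ⟨hi.1, hi.2⟩, rfl⟩)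
end

section
/- Let I be a monomial ideal in the jet setting such that its m-th jet ideal I_m is a monomial ideal whose radical √I_m is square-free monomial. Then in R_m we have √(I_m + m^e) = √I_m + m^e, where m^e is the extension of the maximal ideal (which is itself a monomial ideal generated by variables). -/
open MvPolynomial

lemma sf_radical (k : Type) [Field k] (σ : Type) (S : Set (σ →₀ ℕ))
    (hsf : ∀ d ∈ S, ∀ i, d i ≤ 1) :
    (Ideal.span ((fun d => monomial d (1 : k)) '' S)).radical =
      Ideal.span ((fun d => monomial d (1 : k)) '' S) := by
  classical
  apply le_antisymm _ Ideal.le_radical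
  intro f hf
  obtain ⟨n, hfn⟩ := hf
  rw [mem_ideal_span_monomial_image]
  intro e he
  by_contra hcon
  push_neg at hcon
  -- evaluation killing variables not in supp e
  set g : σ → MvPolynomial σ k := fun i => if e i = 0 then 0 else X i with hg
  have hker : Ideal.span ((fun d => monomial d (1 : k)) '' S) ≤ RingHom.ker (aeval g).toRingHom := by
    rw [Ideal.span_le]
    rintro _ ⟨s, hs, rfl⟩
    have : ∃ i, e i < s i := by
      by_contra h; push_neg at h
      exact hcon s hs (fun i => h i)
    obtain ⟨i, hi⟩ := this
    have hei : e i = 0 := by have := hsf s hs i; omega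
    have hsi : s i ≠ 0 := by omega
    simp only [SetLike.mem_coe, RingHom.mem_ker, AlgHom.toRingHom_eq_coe, RingHom.coe_coe,
      aeval_monomial]
    rw [Finsupp.prod]
    rw [Finset.prod_eq_zero (Finsupp.mem_support_iff.mpr hsi)]
    · ring
    · simp [hg, hei, hsi]
  have hzero : (aeval g f) ^ n = 0 := by
    have := hker hfn
    simpa [RingHom.mem_ker, map_pow] using this
  have hfz : aeval g f = 0 := by
    have : IsNilpotent (aeval g f) := ⟨n, hzero⟩
    exact this.eq_zero
  have hcoeff : coeff e (aeval g f) = coeff e f := by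
    conv_lhs => rw [f.as_sum, map_sum]
    rw [MvPolynomial.coeff_sum]
    rw [Finset.sum_eq_single e]
    · rw [aeval_monomial]
      have : (e.prod fun i k => g i ^ k) = e.prod fun i m => (X i : MvPolynomial σ k) ^ m := by
        apply Finsupp.prod_congr
        intro i hi
        have : e i ≠ 0 := Finsupp.mem_support_iff.mp hi
        simp [hg, this]
      rw [this, algebraMap_eq, ← monomial_eq, coeff_monomial, if_pos rfl]
    · intro e' _ hne
      by_cases hsup : ∀ i, e' i ≠ 0 → e i ≠ 0
      · rw [aeval_monomial]
        have : (e'.prod fun i k => g i ^ k) = e'.prod fun i m => (X i : MvPolynomial σ k) ^ m := by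
          apply Finsupp.prod_congr
          intro i hi
          simp [hg, hsup i (Finsupp.mem_support_iff.mp hi)]
        rw [this, algebraMap_eq, ← monomial_eq, coeff_monomial, if_neg hne]
      · push_neg at hsup
        obtain ⟨i, hi1, hi2⟩ := hsup
        rw [aeval_monomial, Finsupp.prod,
          Finset.prod_eq_zero (Finsupp.mem_support_iff.mpr hi1) (by simp [hg, hi2, hi1]),
          mul_zero, coeff_zero]
    · intro h; exact absurd he h
  rw [hfz, coeff_zero] at hcoeff
  exact Finsupp.mem_support_iff.mp he hcoeff.symm


/-- in a polynomial ring, if `J` is an ideal whose radical `√J` is a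
square-free monomial ideal, and `P` is an ideal generated by variables, then
`√(J + P) = √J + P`. (This applies to `J = I_m` with `√I_m` square-free and `P = 𝔪^e`,
giving `√(I_m + 𝔪^e) = √I_m + 𝔪^e`.) -/
theorem radical_sup_span_X (k : Type) [Field k] (σ : Type) (J : Ideal (MvPolynomial σ k))
    (S : Set (σ →₀ ℕ)) (hsf : ∀ d ∈ S, ∀ i, d i ≤ 1)
    (hJ : J.radical = Ideal.span ((fun d => MvPolynomial.monomial d (1 : k)) '' S))
    (T : Set σ) :
    (J ⊔ Ideal.span (MvPolynomial.X '' T)).radical =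
      J.radical ⊔ Ideal.span (MvPolynomial.X '' T) := by
  classical
  set P := Ideal.span (MvPolynomial.X '' T : Set (MvPolynomial σ k)) with hP
  set S' : Set (σ →₀ ℕ) := S ∪ (fun i => Finsupp.single i 1) '' T with hS'
  have hsf' : ∀ d ∈ S', ∀ i, d i ≤ 1 := by
    rintro d (hd | ⟨i, hi, rfl⟩) j
    · exact hsf d hd j
    · rw [Finsupp.single_apply]
      split <;> omega
  have himg : (fun d => monomial d (1 : k)) '' S' =
      ((fun d => monomial d (1 : k)) '' S) ∪ (MvPolynomial.X '' T) := by
    rw [hS', Set.image_union, Set.image_image]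
    rfl
  have hM : J.radical ⊔ P = Ideal.span ((fun d => monomial d (1 : k)) '' S') := by
    rw [hJ, hP, ← Ideal.span_union, himg]
  apply le_antisymm
  · calc (J ⊔ P).radical ≤ (J.radical ⊔ P).radical :=
          Ideal.radical_mono (sup_le_sup_right Ideal.le_radical _)
      _ = J.radical ⊔ P := by rw [hM, sf_radical k σ S' hsf']
  · exact sup_le (Ideal.radical_mono le_sup_left) (le_sup_right.trans Ideal.le_radical)
end

section
/- Let R = k[[x_1, ..., x_n]] and I = (x_1^{a_1} ··· x_r^{a_r}) a principal monomial ideal with r ≤ n and a_i ∈ ℕ. Then the monomial x_1^{b_1} ··· x_n^{b_n} lies in I^{m-jsc} if and only if for all t_1, ..., t_n ∈ ℕ_{≥1} with t_1 b_1 + ··· + t_n b_n ≤ m, one has t_1 a_1 + ··· + t_r a_r ≤ m. -/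
open Polynomial

/-- A test datum for the `m`-th jet support closure: like a jet closure test,
but with the coefficient `k`-algebra `A` required to be reduced (functor-of-points
description of maps from `(R_m/(I_m + 𝔪^e))_red`). -/
structure JetSupportTest (k : Type) [CommRing k] {R : Type} [CommRing R] [Algebra k R]
    (𝔪 : Ideal R) (m : ℕ) (I : Ideal R) where
  A : Type
  [instCommRing : CommRing A]
  [instReduced : IsReduced A]
  [instAlgebra : Algebra k A]
  φ : R →ₐ[k] JetTrunc A m
  ker_I : ∀ f ∈ I, φ f = 0
  max_to_t : ∀ f ∈ 𝔪, φ f ∈ Ideal.span {jetT A m}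

attribute [instance] JetSupportTest.instCommRing JetSupportTest.instReduced
  JetSupportTest.instAlgebra

/-- The `m`-th jet support closure `I^{m-jsc}` of an ideal `I` in a local `k`-algebra
`(R, 𝔪)`. -/
noncomputable def jetSupportClosure (k : Type) [CommRing k] {R : Type} [CommRing R]
    [Algebra k R] (𝔪 : Ideal R) (m : ℕ) (I : Ideal R) : Ideal R :=
  sInf { J : Ideal R | ∃ T : JetSupportTest k 𝔪 m I, J = RingHom.ker T.φ }

/-!
A test `φ` sends every `x_i` into `(t)`, say `φ(x_i) = p_i(t)` with `t ∣ p_i`. When the coefficient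
ring is a domain, let `w_i` be the order of `p_i`, capped at `m + 1`: `φ(x^a) = 0` forces
`∑ w_i a_i > m`, so `∑ w_i b_i > m` by hypothesis, so `φ(x^b) = 0`. A reduced coefficient ring is
handled prime by prime, its nilradical being the intersection of its primes. Conversely, for weights
`w_i ≥ 1` with `∑ w_i a_i > m`, the substitution `x_i ↦ t^{w_i}` into `k[t]/(t^{m+1})` is a test,
and it does not kill `x^b` unless `∑ w_i b_i > m`.
-/

namespace MvPowerSeries

variable {R S σ : Type*} [CommRing R] [CommRing S] [Algebra R S] [Finite σ]

noncomputable def aevalOfIsNilpotent (a : σ → S) (ha : ∀ i, IsNilpotent (a i)) :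
    MvPowerSeries σ R →ₐ[R] S :=
  letI : UniformSpace R := ⊥
  letI : UniformSpace S := ⊥
  haveI : ContinuousSMul R S := ⟨continuous_of_discreteTopology⟩
  aeval (a := a) ⟨fun i => (ha i).isTopologicallyNilpotent, by simp⟩

variable {a : σ → S} {ha : ∀ i, IsNilpotent (a i)}

@[simp]
lemma aevalOfIsNilpotent_X (i : σ) : aevalOfIsNilpotent (R := R) a ha (X i) = a i := by
  let _ : UniformSpace R := ⊥
  let _ : UniformSpace S := ⊥
  have : ContinuousSMul R S := ⟨continuous_of_discreteTopology⟩
  rw [aevalOfIsNilpotent, coe_aeval, eval₂_X]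

lemma aevalOfIsNilpotent_mem {J : Ideal S} (hJ : ∀ i, a i ∈ J) {f : MvPowerSeries σ R}
    (hf : constantCoeff f = 0) : aevalOfIsNilpotent a ha f ∈ J := by
  let _ : UniformSpace R := ⊥
  let _ : UniformSpace S := ⊥
  have : ContinuousSMul R S := ⟨continuous_of_discreteTopology⟩
  refine (isClosed_discrete (J : Set S)).mem_of_tendsto (hasSum_aeval _ f)
    (Filter.Eventually.of_forall fun s => J.sum_mem fun d _ => ?_)
  rcases eq_or_ne d 0 with rfl | hd
  · simp [hf]
  · obtain ⟨i, hi⟩ := Finsupp.ne_iff.1 hd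
    rw [Algebra.smul_def]
    refine J.mul_mem_left _ (J.mem_of_dvd (Finset.dvd_prod_of_mem _ (Finsupp.mem_support_iff.2 hi))
      (J.pow_mem_of_mem (hJ i) _ (Nat.pos_of_ne_zero hi)))

end MvPowerSeries

section WeightedDivisibility

variable {ι : Type*} [Fintype ι] {m : ℕ} {a b : ι → ℕ}

theorem pow_succ_dvd_prod_pow_of_weighted_sum_le {M : Type*} [CommMonoidWithZero M]
    [IsCancelMulZero M] {p : M} (hp : Prime p) {x : ι → M} (hx : ∀ i, p ∣ x i)
    (hab : ∀ t : ι → ℕ, (∀ i, 1 ≤ t i) → ∑ i, t i * b i ≤ m → ∑ i, t i * a i ≤ m)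
    (ha : p ^ (m + 1) ∣ ∏ i, x i ^ a i) : p ^ (m + 1) ∣ ∏ i, x i ^ b i := by
  set t : ι → ℕ := fun i => (min (emultiplicity p (x i)) (m + 1 : ℕ)).toNat
  have ht : ∀ i, (t i : ℕ∞) = min (emultiplicity p (x i)) (m + 1 : ℕ) := fun i =>
    ENat.natCast_toNat (ne_top_of_le_ne_top (ENat.natCast_ne_top _) (min_le_right _ _))
  have hpos : ∀ i, 1 ≤ t i := fun i => by
    have h1 : ((1 : ℕ) : ℕ∞) ≤ emultiplicity p (x i) :=
      le_emultiplicity_of_pow_dvd (by simpa using hx i)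
    have : ((1 : ℕ) : ℕ∞) ≤ t i := by rw [ht]; exact le_min h1 (by simp)
    exact_mod_cast this
  have hcap : ∀ i, t i ≤ m → (t i : ℕ∞) = emultiplicity p (x i) := fun i hi => by
    rw [ht]
    refine min_eq_left (le_of_not_gt fun hlt => ?_)
    have hi' := (Nat.cast_le (α := ℕ∞)).2 hi
    rw [ht, min_eq_right hlt.le, Nat.cast_le] at hi'
    omega
  have hta : m < ∑ i, t i * a i := by
    by_contra! hle
    have hsum : ∑ i, a i * emultiplicity p (x i) = ((∑ i, t i * a i : ℕ) : ℕ∞) := by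
      push_cast
      refine Finset.sum_congr rfl fun i _ => ?_
      rcases Nat.eq_zero_or_pos (a i) with h0 | h0
      · simp [h0]
      · rw [← hcap i ((Nat.le_mul_of_pos_right _ h0).trans <| (Finset.single_le_sum
          (fun j _ => Nat.zero_le (t j * a j)) (Finset.mem_univ i)).trans hle), mul_comm]
    have := le_emultiplicity_of_pow_dvd ha
    simp_rw [Finset.emultiplicity_prod hp, emultiplicity_pow hp, hsum, Nat.cast_le] at this
    omega
  have htb : m < ∑ i, t i * b i := by
    by_contra! hle
    exact absurd (hab t hpos hle) (not_le.2 hta)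
  calc p ^ (m + 1) ∣ p ^ (∑ i, t i * b i) := pow_dvd_pow p htb
    _ = ∏ i, (p ^ t i) ^ b i := by simp_rw [← pow_mul, Finset.prod_pow_eq_pow_sum]
    _ ∣ ∏ i, x i ^ b i := Finset.prod_dvd_prod_of_dvd _ _ fun i _ =>
      pow_dvd_pow_of_dvd (pow_dvd_of_le_emultiplicity ((ht i).trans_le (min_le_left _ _))) _

theorem X_pow_succ_dvd_prod_pow_of_weighted_sum_le {A : Type*} [CommRing A] [IsReduced A]
    {p : ι → A[X]} (hp : ∀ i, X ∣ p i)
    (hab : ∀ t : ι → ℕ, (∀ i, 1 ≤ t i) → ∑ i, t i * b i ≤ m → ∑ i, t i * a i ≤ m)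
    (ha : X ^ (m + 1) ∣ ∏ i, p i ^ a i) : X ^ (m + 1) ∣ ∏ i, p i ^ b i := by
  rw [X_pow_dvd_iff]
  intro d hd
  refine (nilpotent_iff_mem_prime.2 fun P hP => ?_).eq_zero
  have hmap : ∀ e : ι → ℕ, (∏ i, p i ^ e i).map (Ideal.Quotient.mk P) =
      ∏ i, (p i).map (Ideal.Quotient.mk P) ^ e i := fun e => by
    simp [Polynomial.map_prod]
  have := pow_succ_dvd_prod_pow_of_weighted_sum_le prime_X
    (fun i => by simpa using Polynomial.map_dvd (Ideal.Quotient.mk P) (hp i)) hab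
    (by simpa [hmap] using Polynomial.map_dvd (Ideal.Quotient.mk P) ha)
  rw [← hmap, X_pow_dvd_iff] at this
  rw [← Ideal.Quotient.eq_zero_iff_mem, ← coeff_map]
  exact this d hd

end WeightedDivisibility

section JetTrunc

variable {A : Type} [CommRing A] {m : ℕ}

theorem jetTrunc_mk_eq_zero_iff {p : A[X]} :
    (Ideal.Quotient.mk _ p : JetTrunc A m) = 0 ↔ X ^ (m + 1) ∣ p := by
  rw [Ideal.Quotient.eq_zero_iff_mem, Ideal.mem_span_singleton]

theorem jetT_pow_eq_zero_iff [Nontrivial A] {s : ℕ} : jetT A m ^ s = 0 ↔ m + 1 ≤ s := by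
  rw [jetT, ← map_pow, jetTrunc_mk_eq_zero_iff, X_pow_dvd_iff]
  refine ⟨fun h => not_lt.1 fun hs => ?_, fun h d hd => ?_⟩
  · simpa using h s hs
  · rw [coeff_X_pow, if_neg (by omega)]

theorem isNilpotent_jetT : IsNilpotent (jetT A m) := by
  nontriviality A
  exact ⟨m + 1, jetT_pow_eq_zero_iff.2 le_rfl⟩

theorem exists_X_dvd_of_mem_span_jetT {z : JetTrunc A m} (hz : z ∈ Ideal.span {jetT A m}) :
    ∃ p : A[X], X ∣ p ∧ z = Ideal.Quotient.mk _ p := by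
  obtain ⟨w, rfl⟩ := Ideal.mem_span_singleton'.1 hz
  obtain ⟨q, rfl⟩ := Ideal.Quotient.mk_surjective w
  exact ⟨q * X, dvd_mul_left _ _, by rw [jetT, map_mul]⟩

end JetTrunc

theorem mem_jetSupportClosure_iff {k : Type} [CommRing k] {R : Type} [CommRing R] [Algebra k R]
    {𝔪 : Ideal R} {m : ℕ} {I : Ideal R} {f : R} :
    f ∈ jetSupportClosure k 𝔪 m I ↔ ∀ T : JetSupportTest k 𝔪 m I, T.φ f = 0 := by
  simp [jetSupportClosure]

section Monomial

variable {k : Type} [Field k] {n m : ℕ} {a b : Fin n → ℕ}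

theorem X_mem_mIdeal (i : Fin n) : MvPowerSeries.X i ∈ mIdeal k n :=
  MvPowerSeries.constantCoeff_X i

noncomputable def weightSubst (w : Fin n → ℕ) (hw : ∀ i, 1 ≤ w i) :
    MvPowerSeries (Fin n) k →ₐ[k] JetTrunc k m :=
  MvPowerSeries.aevalOfIsNilpotent (fun i => jetT k m ^ w i)
    fun i => isNilpotent_jetT.pow_of_pos (by have := hw i; omega)

theorem weightSubst_prod_X_pow {w : Fin n → ℕ} {hw : ∀ i, 1 ≤ w i} (e : Fin n → ℕ) :
    weightSubst w hw (∏ i, (MvPowerSeries.X i : MvPowerSeries (Fin n) k) ^ e i) =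
      jetT k m ^ ∑ i, w i * e i := by
  simp [weightSubst, ← pow_mul, Finset.prod_pow_eq_pow_sum]

noncomputable def weightJetTest (w : Fin n → ℕ) (hw : ∀ i, 1 ≤ w i) (ha : m < ∑ i, w i * a i) :
    JetSupportTest k (mIdeal k n) m
      (Ideal.span {∏ i, (MvPowerSeries.X i : MvPowerSeries (Fin n) k) ^ a i}) where
  A := k
  φ := weightSubst w hw
  ker_I f hf := by
    obtain ⟨g, rfl⟩ := Ideal.mem_span_singleton'.1 hf
    rw [map_mul, weightSubst_prod_X_pow, jetT_pow_eq_zero_iff.2 ha, mul_zero]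
  max_to_t f hf := MvPowerSeries.aevalOfIsNilpotent_mem
    (fun i => Ideal.pow_mem_of_mem _ (Ideal.mem_span_singleton_self _) _ (hw i)) hf

theorem weighted_sum_lt_of_prod_X_pow_mem_jetSupportClosure
    (h : ∏ i, (MvPowerSeries.X i : MvPowerSeries (Fin n) k) ^ b i ∈
      jetSupportClosure k (mIdeal k n) m
        (Ideal.span {∏ i, (MvPowerSeries.X i : MvPowerSeries (Fin n) k) ^ a i}))
    {w : Fin n → ℕ} (hw : ∀ i, 1 ≤ w i) (ha : m < ∑ i, w i * a i) : m < ∑ i, w i * b i := by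
  have := mem_jetSupportClosure_iff.1 h (weightJetTest w hw ha)
  rwa [weightJetTest, weightSubst_prod_X_pow, jetT_pow_eq_zero_iff, Nat.succ_le_iff] at this

theorem prod_X_pow_mem_jetSupportClosure
    (hab : ∀ t : Fin n → ℕ, (∀ i, 1 ≤ t i) → ∑ i, t i * b i ≤ m → ∑ i, t i * a i ≤ m) :
    ∏ i, (MvPowerSeries.X i : MvPowerSeries (Fin n) k) ^ b i ∈
      jetSupportClosure k (mIdeal k n) m
        (Ideal.span {∏ i, (MvPowerSeries.X i : MvPowerSeries (Fin n) k) ^ a i}) := by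
  refine mem_jetSupportClosure_iff.2 fun T => ?_
  choose p hpX hp using fun i => exists_X_dvd_of_mem_span_jetT (T.max_to_t _ (X_mem_mIdeal i))
  have hmk : ∀ e : Fin n → ℕ, T.φ (∏ i, (MvPowerSeries.X i) ^ e i) =
      Ideal.Quotient.mk _ (∏ i, p i ^ e i) := fun e => by
    simp [hp]
  rw [hmk, jetTrunc_mk_eq_zero_iff]
  refine X_pow_succ_dvd_prod_pow_of_weighted_sum_le hpX hab ?_
  rw [← jetTrunc_mk_eq_zero_iff, ← hmk]
  exact T.ker_I _ (Ideal.mem_span_singleton_self _)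

end Monomial

theorem monomial_mem_jetSupportClosure_principal_general (k : Type) [Field k] (n : ℕ) (a : Fin n → ℕ)
    (m : ℕ) (b : Fin n → ℕ) :
    (∏ i : Fin n, (MvPowerSeries.X i : MvPowerSeries (Fin n) k) ^ b i) ∈
        jetSupportClosure k (mIdeal k n) m
          (Ideal.span {∏ i : Fin n, (MvPowerSeries.X i : MvPowerSeries (Fin n) k) ^ a i}) ↔
      ∀ t : Fin n → ℕ, (∀ i, 1 ≤ t i) → ∑ i : Fin n, t i * b i ≤ m →
        ∑ i : Fin n, t i * a i ≤ m :=
  ⟨fun h _ ht htb => not_lt.1 fun hta =>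
      (weighted_sum_lt_of_prod_X_pow_mem_jetSupportClosure h ht hta).not_ge htb,
    prod_X_pow_mem_jetSupportClosure⟩

/-- for a principal monomial ideal `I = (x_1^{a_1} ⋯ x_r^{a_r})` in
`k[[x_1, ..., x_n]]` (with `a_i = 0` for `i > r`), the monomial `x_1^{b_1} ⋯ x_n^{b_n}`
lies in `I^{m-jsc}` iff for all `t_1, ..., t_n ≥ 1` with `Σ t_i b_i ≤ m` one has
`Σ t_i a_i ≤ m`. -/
theorem monomial_mem_jetSupportClosure_principal (k : Type) [Field k] [IsAlgClosed k]
    [CharZero k] (n r : ℕ) (hr : r ≤ n) (a : Fin n → ℕ)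
    (ha : ∀ i : Fin n, r ≤ (i : ℕ) → a i = 0) (m : ℕ) (b : Fin n → ℕ) :
    (∏ i : Fin n, (MvPowerSeries.X i : MvPowerSeries (Fin n) k) ^ b i) ∈
        jetSupportClosure k (mIdeal k n) m
          (Ideal.span {∏ i : Fin n, (MvPowerSeries.X i : MvPowerSeries (Fin n) k) ^ a i}) ↔
      ∀ t : Fin n → ℕ, (∀ i, 1 ≤ t i) → ∑ i : Fin n, t i * b i ≤ m →
        ∑ i : Fin n, t i * a i ≤ m :=
  monomial_mem_jetSupportClosure_principal_general k n a m b
end
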